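/- The kernel of ψ̄ is contained in yH ш̃ yH: every u ∈ yH with ψ̄(u) = 0 lies in the ℚ-linear span of the elements w₁ ш̃ w₂ with w₁, w₂ ∈ yH. -/

import Mathlib

open scoped BigOperators

/-- `H¹`: the ℚ-vector space with basis the words `z_{k₁}⋯z_{k_r}` in the letters
`z_k` (`k` a positive integer), encoded as finitely supported functions on lists. -/
abbrev H1 : Type := List ℕ+ →₀ ℚ

/-- The basis word `z_{k₁}⋯z_{k_r}` of `H¹` (the empty list is the unit `1`). -/
noncomputable def W (l : List ℕ+) : H1 := Finsupp.single l 1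

/-- Left multiplication by the letter `z_k` (linear extension of `w ↦ z_k w`). -/
noncomputable def consL (k : ℕ+) (h : H1) : H1 := Finsupp.mapDomain (fun w => k :: w) h

/-- Right multiplication by the letter `z_k` (linear extension of `w ↦ w z_k`). -/
noncomputable def mulRk (k : ℕ+) (h : H1) : H1 := Finsupp.mapDomain (fun w => w ++ [k]) h

/-- The harmonic (stuffle) product on words:
`1 ∗ u = u ∗ 1 = u`, `z_k u ∗ z_l v = z_k(u ∗ z_l v) + z_l(z_k u ∗ v) + z_{k+l}(u ∗ v)`. -/
noncomputable def harmW : List ℕ+ → List ℕ+ → H1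
  | [], v => W v
  | u, [] => W u
  | k :: u, l :: v =>
      consL k (harmW u (l :: v)) + consL l (harmW (k :: u) v) + consL (k + l) (harmW u v)
  termination_by u v => u.length + v.length

/-- The harmonic product `∗` on `H¹`, as the ℚ-bilinear extension of `harmW`. -/
noncomputable def harm (g h : H1) : H1 :=
  g.sum fun u c => h.sum fun v d => (c * d) • harmW u v

/-- The product `ш̃` on words in the letters `z_k`:
`1 ш̃ u = u ш̃ 1 = u`, `z_k u ш̃ z_l v = z_k(u ш̃ z_l v) + z_l(z_k u ш̃ v)`. -/
noncomputable def shtW : List ℕ+ → List ℕ+ → H1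
  | [], v => W v
  | u, [] => W u
  | k :: u, l :: v => consL k (shtW u (l :: v)) + consL l (shtW (k :: u) v)
  termination_by u v => u.length + v.length

/-- The shuffle product `ш̃` on `H¹` (on the alphabet `z₁, z₂, …`), bilinear extension. -/
noncomputable def sht (g h : H1) : H1 :=
  g.sum fun u c => h.sum fun v d => (c * d) • shtW u v

/-- Addition of a natural number to a positive natural number. -/
def pplus (k : ℕ+) (e : ℕ) : ℕ+ := ⟨(k : ℕ) + e, by have := k.pos; omega⟩

/-- `σ_m` on words: `σ_m(z_{k₁}⋯z_{k_r}) = Σ_{e₁+⋯+e_r=m} ∏_j C(k_j+e_j-1, e_j) z_{k₁+e₁}⋯z_{k_r+e_r}`,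
which is the word formula for `σ_m(1) = δ_{m,0}`, `σ_m(yw) = y(w ш x^m)`. -/
noncomputable def sigW : ℕ → List ℕ+ → H1
  | m, [] => if m = 0 then W [] else 0
  | m, k :: ks => ∑ e ∈ Finset.range (m + 1),
      ((((k : ℕ) + e - 1).choose e : ℚ)) • consL (pplus k e) (sigW (m - e) ks)
  termination_by m ks => ks.length

/-- `σ_m : H¹ → H¹`, linear extension. -/
noncomputable def sig (m : ℕ) (h : H1) : H1 := h.sum fun ks c => c • sigW m ks

/-- `S` on words: the word formula for `S(1) = 1`, `S(yw) = y S₁(w)` where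
`S₁(x) = x`, `S₁(y) = x + y`; explicitly `S(z_{k₁}⋯z_{k_r})` is the sum over all ways of
replacing separating commas by `+`. -/
noncomputable def StW : List ℕ+ → H1
  | [] => W []
  | [k] => W [k]
  | k :: l :: ks => consL k (StW (l :: ks)) + StW ((k + l) :: ks)
  termination_by ks => ks.length

/-- `S : H¹ → H¹`, linear extension. -/
noncomputable def St (h : H1) : H1 := h.sum fun ks c => c • StW ks

/-- `S̃ = S ∘ d` on words, where `d(x) = x`, `d(y) = -y`, so `d` multiplies a word of
depth `r` by `(-1)^r`. -/
noncomputable def SttW (ks : List ℕ+) : H1 := ((-1 : ℚ)) ^ ks.length • StW ks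

/-- `S̃ = S ∘ d : H¹ → H¹`, linear extension. -/
noncomputable def Stt (h : H1) : H1 := h.sum fun ks c => c • SttW ks

/-- `ψ` on words: `ψ(z_{k₁}⋯z_{k_r}) = Σ_{i=0}^{r-1} z_{k₁}⋯z_{k_i} ∗ S̃(σ₁(z_{k_r}⋯z_{k_{i+1}}))`. -/
noncomputable def psiW (ks : List ℕ+) : H1 :=
  ∑ i ∈ Finset.range ks.length, harm (W (ks.take i)) (Stt (sigW 1 ((ks.drop i).reverse)))

/-- `ψ : yH → H¹`, linear extension. -/
noncomputable def psi (h : H1) : H1 := h.sum fun ks c => c • psiW ks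

/-- `ψ̄` on words: `ψ̄(z_{k₁}⋯z_{k_r}) = Σ_{i=0}^{r-1} (-1)^{r-i} z_{k₁}⋯z_{k_i} ш̃ σ₁(z_{k_r}⋯z_{k_{i+1}})`. -/
noncomputable def psibW (ks : List ℕ+) : H1 :=
  ∑ i ∈ Finset.range ks.length,
    ((-1 : ℚ)) ^ (ks.length - i) • sht (W (ks.take i)) (sigW 1 ((ks.drop i).reverse))

/-- `ψ̄ : yH → H¹`, linear extension. -/
noncomputable def psib (h : H1) : H1 := h.sum fun ks c => c • psibW ks

/-- `ρ` on words:
`ρ(z_{k₁}⋯z_{k_r}) = Σ_{i=1}^{r} (-1)^{r-i} (z_{k₁}⋯z_{k_{i-1}} ш̃ z_{k_r}⋯z_{k_{i+1}}) z_{k_i}`. -/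
noncomputable def rhoW (ks : List ℕ+) : H1 :=
  ∑ i : Fin ks.length, ((-1 : ℚ)) ^ (ks.length - 1 - (i : ℕ)) •
    mulRk (ks.get i) (sht (W (ks.take (i : ℕ))) (W ((ks.drop ((i : ℕ) + 1)).reverse)))

/-- `ρ : yH → yH`, linear extension. -/
noncomputable def rho (h : H1) : H1 := h.sum fun ks c => c • rhoW ks

/-- `yH ⊆ H¹`: the span of the nonempty words `z_{k₁}⋯z_{k_r}` (`r ≥ 1`). -/
noncomputable def yH1 : Submodule ℚ H1 := Submodule.span ℚ {h | ∃ k ks, h = W (k :: ks)}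

/-- `yH ∗ yH`: the ℚ-span of the harmonic products `w₁ ∗ w₂` with `w₁, w₂ ∈ yH`. -/
noncomputable def harmSpan : Submodule ℚ H1 :=
  Submodule.span ℚ {h | ∃ u ∈ yH1, ∃ v ∈ yH1, h = harm u v}

/-- `yH ш̃ yH`: the ℚ-span of the products `w₁ ш̃ w₂` with `w₁, w₂ ∈ yH`. -/
noncomputable def shtSpan : Submodule ℚ H1 :=
  Submodule.span ℚ {h | ∃ u ∈ yH1, ∃ v ∈ yH1, h = sht u v}

/-! ### Linearization infrastructure -/

noncomputable def lift (f : List ℕ+ → H1) : H1 →ₗ[ℚ] H1 :=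
  Finsupp.lsum ℚ fun w => LinearMap.toSpanSingleton ℚ H1 (f w)

lemma lift_apply (f : List ℕ+ → H1) (h : H1) :
    lift f h = h.sum fun w c => c • f w := by
  rw [lift, Finsupp.lsum_apply]; rfl

lemma lift_W (f : List ℕ+ → H1) (w : List ℕ+) : lift f (W w) = f w := by
  rw [lift_apply, W, Finsupp.sum_single_index] <;> simp

noncomputable def liftb (f : List ℕ+ → List ℕ+ → H1) : H1 →ₗ[ℚ] H1 →ₗ[ℚ] H1 :=
  Finsupp.lsum ℚ fun u => LinearMap.toSpanSingleton ℚ (H1 →ₗ[ℚ] H1) (lift (f u))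

lemma liftb_apply (f : List ℕ+ → List ℕ+ → H1) (g h : H1) :
    liftb f g h = g.sum fun u c => c • lift (f u) h := by
  rw [liftb, Finsupp.lsum_apply]
  exact map_finsuppSum (LinearMap.applyₗ h) _ _

lemma sht_eq (g h : H1) : sht g h = liftb shtW g h := by
  rw [liftb_apply, sht]
  refine Finsupp.sum_congr fun u _ => ?_
  rw [lift_apply, Finsupp.smul_sum]
  exact Finsupp.sum_congr fun v _ => by rw [mul_smul]

lemma sig_eq (m : ℕ) (h : H1) : sig m h = lift (sigW m) h := (lift_apply _ _).symm
lemma psib_eq (h : H1) : psib h = lift psibW h := (lift_apply _ _).symm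

lemma sht_WW (u v : List ℕ+) : sht (W u) (W v) = shtW u v := by
  rw [sht_eq, liftb_apply, W, Finsupp.sum_single_index, one_smul, lift_W]
  simp
/-! ### Basic operators and homogeneity -/

def wt (l : List ℕ+) : ℕ := (l.map fun k => (k : ℕ)).sum

@[simp] lemma wt_nil : wt [] = 0 := rfl
@[simp] lemma wt_cons (k : ℕ+) (l : List ℕ+) : wt (k :: l) = (k : ℕ) + wt l := rfl

lemma wt_ge_len (l : List ℕ+) : l.length ≤ wt l := by
  induction l with
  | nil => simp
  | cons k ks ih => have := k.pos; simp only [List.length_cons, wt_cons]; omega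

lemma consL_W (k : ℕ+) (w : List ℕ+) : consL k (W w) = W (k :: w) :=
  Finsupp.mapDomain_single

noncomputable def consLL (k : ℕ+) : H1 →ₗ[ℚ] H1 := Finsupp.lmapDomain ℚ ℚ (k :: ·)

lemma consL_eq (k : ℕ+) (h : H1) : consL k h = consLL k h := rfl

/-- The submodule of elements homogeneous of length `r` and weight `n`. -/
noncomputable def HsubM (r n : ℕ) : Submodule ℚ H1 where
  carrier := {h | ∀ w, h w ≠ 0 → w.length = r ∧ wt w = n}
  add_mem' := by
    intro a b ha hb w hw
    by_cases h1 : a w ≠ 0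
    · exact ha w h1
    · push_neg at h1
      refine hb w ?_
      intro h2; apply hw; simp [Finsupp.add_apply, h1, h2]
  zero_mem' := by intro w hw; simp at hw
  smul_mem' := by intro c h hh w hw; apply hh; intro h0; apply hw; simp [h0]

lemma W_mem_HsubM (w : List ℕ+) : W w ∈ HsubM w.length (wt w) := by
  intro v hv
  rw [W, Finsupp.single_apply] at hv
  rcases eq_or_ne w v with rfl | h
  · exact ⟨rfl, rfl⟩
  · simp [h] at hv

lemma consL_mem_HsubM {r n : ℕ} {h : H1} (k : ℕ+) (hh : h ∈ HsubM r n) :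
    consL k h ∈ HsubM (r + 1) (n + k) := by
  intro w hw
  have hsupp : w ∈ (consL k h).support := Finsupp.mem_support_iff.mpr hw
  have := Finsupp.mapDomain_support hsupp
  simp only [Finset.mem_image, Finsupp.mem_support_iff] at this
  obtain ⟨v, hv, rfl⟩ := this
  obtain ⟨h1, h2⟩ := hh v hv
  constructor
  · simp [h1]
  · simp only [wt_cons, h2]; omega

lemma mem_yH1_iff (h : H1) : h ∈ yH1 ↔ h [] = 0 := by
  constructor
  · intro hm
    induction hm using Submodule.span_induction with
    | mem x hx => obtain ⟨k, ks, rfl⟩ := hx; simp [W, Finsupp.single_apply]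
    | zero => simp
    | add a b _ _ ha hb => simp [Finsupp.add_apply, ha, hb]
    | smul c a _ ha => simp [Finsupp.smul_apply, ha]
  · intro h0
    have : h = h.sum fun w c => Finsupp.single w c := (Finsupp.sum_single h).symm
    rw [this]
    refine Submodule.finsuppSum_mem ℚ yH1 h (fun w c => Finsupp.single w c) fun w hw => ?_
    match w with
    | [] => exact absurd h0 hw
    | k :: ks =>
        show Finsupp.single (k :: ks) (h (k :: ks)) ∈ yH1
        have : Finsupp.single (k :: ks) (h (k :: ks)) = h (k :: ks) • W (k :: ks) := by
          rw [W, Finsupp.smul_single, smul_eq_mul, mul_one]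
        rw [this]
        exact Submodule.smul_mem _ _ (Submodule.subset_span ⟨k, ks, rfl⟩)

lemma HsubM_mem_yH1 {r n : ℕ} {h : H1} (hr : 1 ≤ r) (hh : h ∈ HsubM r n) : h ∈ yH1 := by
  rw [mem_yH1_iff]
  by_contra h0
  have := (hh [] h0).1
  simp at this; omega

lemma HsubM_eq_zero {r n : ℕ} {h : H1} (hh : h ∈ HsubM r n) (hlt : n < r) : h = 0 := by
  ext w
  by_contra h0
  obtain ⟨h1, h2⟩ := hh w h0
  have := wt_ge_len w
  omega

/-- predecessor on ℕ+ (1 ↦ 1) -/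
def ppred (k : ℕ+) : ℕ+ := ⟨max ((k : ℕ) - 1) 1, by omega⟩

lemma ppred_succ (k : ℕ+) : ppred (k + 1) = k := by
  have := k.pos
  apply PNat.coe_injective
  simp [ppred, PNat.add_coe]
  omega

lemma ppred_coe {k : ℕ+} (hk : 2 ≤ (k : ℕ)) : ((ppred k : ℕ+) : ℕ) = (k : ℕ) - 1 := by
  simp [ppred]; omega

/-- the lowering operator F on words -/
noncomputable def FW : List ℕ+ → H1
  | [] => 0
  | k :: ks => ((k : ℚ) - 1) • W (ppred k :: ks) + consL k (FW ks)

lemma sigW_zero (ks : List ℕ+) : sigW 0 ks = W ks := by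
  induction ks with
  | nil => simp [sigW]
  | cons k ks ih =>
      rw [sigW]
      simp [ih, consL_W]
      have : pplus k 0 = k := by apply PNat.coe_injective; simp [pplus]
      rw [this]

lemma pplus_one (k : ℕ+) : pplus k 1 = k + 1 := by
  apply PNat.coe_injective; simp [pplus, PNat.add_coe]

lemma sigW_one_nil : sigW 1 [] = 0 := by simp [sigW]

lemma sigW_one_cons (k : ℕ+) (ks : List ℕ+) :
    sigW 1 (k :: ks) = (k : ℚ) • W ((k + 1) :: ks) + consL k (sigW 1 ks) := by
  rw [sigW]
  rw [Finset.sum_range_succ, Finset.sum_range_succ, Finset.sum_range_zero, zero_add]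
  rw [pplus_one, sigW_zero, consL_W]
  have h0 : pplus k 0 = k := by apply PNat.coe_injective; simp [pplus]
  have hk := k.pos
  have c0 : ((k : ℕ) + 0 - 1).choose 0 = 1 := Nat.choose_zero_right _
  have c1 : ((k : ℕ) + 1 - 1).choose 1 = (k : ℕ) := by
    have : (k : ℕ) + 1 - 1 = (k : ℕ) := by omega
    rw [this, Nat.choose_one_right]
  rw [c0, c1, h0]
  push_cast
  rw [one_smul, add_comm]
/-! ### E and F operators, homogeneity facts -/

noncomputable def Elin : H1 →ₗ[ℚ] H1 := lift (sigW 1)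
noncomputable def Flin : H1 →ₗ[ℚ] H1 := lift FW

lemma lift_mem (S : Submodule ℚ H1) (f : List ℕ+ → H1) (h : H1)
    (hf : ∀ w, h w ≠ 0 → f w ∈ S) : lift f h ∈ S := by
  rw [lift_apply]
  exact Submodule.finsuppSum_mem ℚ S h _ fun w hw => Submodule.smul_mem _ _ (hf w hw)

lemma shtW_nil_left (v : List ℕ+) : shtW [] v = W v := by
  rw [shtW.eq_def]

lemma shtW_nil_right (u : List ℕ+) : shtW u [] = W u := by
  rw [shtW.eq_def]; cases u <;> rfl

lemma shtW_cons (k l : ℕ+) (u v : List ℕ+) :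
    shtW (k :: u) (l :: v) = consL k (shtW u (l :: v)) + consL l (shtW (k :: u) v) := by
  rw [shtW]

lemma shtW_mem (u v : List ℕ+) :
    shtW u v ∈ HsubM (u.length + v.length) (wt u + wt v) := by
  induction u, v using shtW.induct with
  | case1 v => rw [shtW_nil_left]; simpa using W_mem_HsubM v
  | case2 u h => rw [shtW_nil_right]; simpa using W_mem_HsubM u
  | case3 k u l v ih1 ih2 =>
      rw [shtW_cons]
      refine Submodule.add_mem _ ?_ ?_
      · have := consL_mem_HsubM k ih1
        have e1 : u.length + (l :: v).length + 1 = (k :: u).length + (l :: v).length := by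
          simp; omega
        have e2 : wt u + wt (l :: v) + (k : ℕ) = wt (k :: u) + wt (l :: v) := by
          simp [wt_cons]; omega
        rwa [e1, e2] at this
      · have := consL_mem_HsubM l ih2
        have e1 : (k :: u).length + v.length + 1 = (k :: u).length + (l :: v).length := by
          simp; omega
        have e2 : wt (k :: u) + wt v + (l : ℕ) = wt (k :: u) + wt (l :: v) := by
          simp [wt_cons]; omega
        rwa [e1, e2] at this

lemma sigW1_mem (w : List ℕ+) : sigW 1 w ∈ HsubM w.length (wt w + 1) := by
  induction w with
  | nil => rw [sigW_one_nil]; exact Submodule.zero_mem _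
  | cons k ks ih =>
      rw [sigW_one_cons]
      refine Submodule.add_mem _ (Submodule.smul_mem _ _ ?_) ?_
      · have := W_mem_HsubM ((k + 1) :: ks)
        have e1 : ((k+1) :: ks).length = (k :: ks).length := by simp
        have e2 : wt ((k+1) :: ks) = wt (k :: ks) + 1 := by
          simp [wt_cons, PNat.add_coe]; omega
        rwa [e1, e2] at this
      · have := consL_mem_HsubM k ih
        have e2 : wt ks + 1 + (k : ℕ) = wt (k :: ks) + 1 := by simp [wt_cons]; omega
        have e1 : ks.length + 1 = (k :: ks).length := by simp
        rwa [e1, e2] at this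

lemma FW_mem (w : List ℕ+) : FW w ∈ HsubM w.length (wt w - 1) := by
  induction w with
  | nil => exact Submodule.zero_mem _
  | cons k ks ih =>
      rw [FW]
      refine Submodule.add_mem _ ?_ ?_
      · rcases eq_or_lt_of_le (PNat.one_le k) with h1 | h2
        · have : ((k : ℚ) - 1) = 0 := by rw [← h1]; simp
          rw [this, zero_smul]; exact Submodule.zero_mem _
        · have hk2 : 2 ≤ (k : ℕ) := h2
          refine Submodule.smul_mem _ _ ?_
          have := W_mem_HsubM (ppred k :: ks)
          have e1 : (ppred k :: ks).length = (k :: ks).length := by simp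
          have e2 : wt (ppred k :: ks) = wt (k :: ks) - 1 := by
            simp [wt_cons, ppred_coe hk2]; omega
          rwa [e1, e2] at this
      · cases ks with
        | nil =>
            show consL k 0 ∈ _
            rw [consL, Finsupp.mapDomain_zero]; exact Submodule.zero_mem _
        | cons l ls =>
            have := consL_mem_HsubM k ih
            have hl := l.pos
            have e1 : (l :: ls).length + 1 = (k :: l :: ls).length := by simp
            have e2 : wt (l :: ls) - 1 + (k : ℕ) = wt (k :: l :: ls) - 1 := by
              have := k.pos
              simp [wt_cons]; omega
            rwa [e1, e2] at this

lemma Elin_mem {r n : ℕ} {h : H1} (hh : h ∈ HsubM r n) : Elin h ∈ HsubM r (n + 1) := by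
  refine lift_mem _ _ _ fun w hw => ?_
  obtain ⟨h1, h2⟩ := hh w hw
  have := sigW1_mem w
  rwa [h1, h2] at this

lemma Flin_mem {r n : ℕ} {h : H1} (hh : h ∈ HsubM r (n + 1)) : Flin h ∈ HsubM r n := by
  refine lift_mem _ _ _ fun w hw => ?_
  obtain ⟨h1, h2⟩ := hh w hw
  have := FW_mem w
  rw [h1, h2] at this
  simpa using this
/-! ### Linear-level identities -/

lemma single_eq_smul_W (w : List ℕ+) (c : ℚ) : (Finsupp.single w c : H1) = c • W w := by
  rw [W, Finsupp.smul_single, smul_eq_mul, mul_one]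

lemma ext_W {f g : H1 →ₗ[ℚ] H1} (h : ∀ w, f (W w) = g (W w)) : f = g := by
  refine Finsupp.lhom_ext fun w c => ?_
  rw [single_eq_smul_W, map_smul, map_smul, h]

@[simp] lemma consL_add (k : ℕ+) (a b : H1) : consL k (a + b) = consL k a + consL k b :=
  Finsupp.mapDomain_add
@[simp] lemma consL_smul (k : ℕ+) (c : ℚ) (a : H1) : consL k (c • a) = c • consL k a :=
  Finsupp.mapDomain_smul c a
@[simp] lemma consL_zero (k : ℕ+) : consL k (0 : H1) = 0 := Finsupp.mapDomain_zero

@[simp] lemma sht_add_left (a b c : H1) : sht (a + b) c = sht a c + sht b c := by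
  simp [sht_eq, map_add]
@[simp] lemma sht_add_right (a b c : H1) : sht a (b + c) = sht a b + sht a c := by
  simp [sht_eq, map_add]
@[simp] lemma sht_smul_left (r : ℚ) (a c : H1) : sht (r • a) c = r • sht a c := by
  simp [sht_eq, map_smul]
@[simp] lemma sht_smul_right (r : ℚ) (a c : H1) : sht a (r • c) = r • sht a c := by
  simp [sht_eq, map_smul]
@[simp] lemma sht_zero_left (c : H1) : sht 0 c = 0 := by simp [sht_eq, map_zero]
@[simp] lemma sht_zero_right (c : H1) : sht c 0 = 0 := by simp [sht_eq, map_zero]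

lemma sht_one_left (a : H1) : sht (W []) a = a := by
  induction a using Finsupp.induction_linear with
  | zero => simp
  | add f g hf hg => simp [hf, hg]
  | single w c => rw [single_eq_smul_W, sht_smul_right, sht_WW, shtW_nil_left]

lemma sht_one_right (a : H1) : sht a (W []) = a := by
  induction a using Finsupp.induction_linear with
  | zero => simp
  | add f g hf hg => simp [hf, hg]
  | single w c => rw [single_eq_smul_W, sht_smul_left, sht_WW, shtW_nil_right]

/-- bilinear extension of the shuffle recursion -/
lemma sht_consL (k l : ℕ+) (a b : H1) :
    sht (consL k a) (consL l b) =
      consL k (sht a (consL l b)) + consL l (sht (consL k a) b) := by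
  induction a using Finsupp.induction_linear with
  | zero => simp
  | add f g hf hg => simp only [consL_add, sht_add_left, sht_add_right, hf, hg]; abel
  | single u c =>
      induction b using Finsupp.induction_linear with
      | zero => simp
      | add f g hf hg => simp only [consL_add, sht_add_left, sht_add_right, hf, hg]; abel
      | single v d =>
          simp only [single_eq_smul_W, consL_smul, sht_smul_left, sht_smul_right,
            consL_W, sht_WW, shtW_cons, smul_add, smul_comm d c]

lemma Elin_W (w : List ℕ+) : Elin (W w) = sigW 1 w := lift_W _ _
lemma Flin_W (w : List ℕ+) : Flin (W w) = FW w := lift_W _ _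

lemma Elin_consL (k : ℕ+) (h : H1) :
    Elin (consL k h) = (k : ℚ) • consL (k + 1) h + consL k (Elin h) := by
  induction h using Finsupp.induction_linear with
  | zero => simp
  | add f g hf hg =>
      simp only [consL_add, map_add, smul_add, hf, hg]; abel
  | single w c =>
      simp only [single_eq_smul_W, consL_smul, map_smul, consL_W, Elin_W, sigW_one_cons,
        smul_add, smul_comm c]

lemma FW_cons (k : ℕ+) (ks : List ℕ+) :
    FW (k :: ks) = ((k : ℚ) - 1) • W (ppred k :: ks) + consL k (FW ks) := by rw [FW]

lemma Flin_consL (k : ℕ+) (h : H1) :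
    Flin (consL k h) = ((k : ℚ) - 1) • consL (ppred k) h + consL k (Flin h) := by
  induction h using Finsupp.induction_linear with
  | zero => simp
  | add f g hf hg => simp only [consL_add, map_add, smul_add, hf, hg]; abel
  | single w c =>
      simp only [single_eq_smul_W, consL_smul, map_smul, consL_W, Flin_W, FW_cons,
        smul_add, smul_comm c]

/-- E is a derivation for the shuffle product, word level -/
lemma Elin_shtW (u v : List ℕ+) :
    Elin (shtW u v) = sht (sigW 1 u) (W v) + sht (W u) (sigW 1 v) := by
  induction u, v using shtW.induct with
  | case1 v => simp [shtW_nil_left, Elin_W, sigW_one_nil, sht_one_left]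
  | case2 u h => simp [shtW_nil_right, Elin_W, sigW_one_nil, sht_one_right]
  | case3 k u l v ih1 ih2 =>
      rw [shtW_cons, map_add, Elin_consL, Elin_consL, ih1, ih2]
      simp only [sigW_one_cons, ← consL_W, ← sht_WW, sht_consL, sht_add_left, sht_add_right,
        sht_smul_left, sht_smul_right, consL_add, consL_smul, smul_add]
      try abel

/-- F is a derivation for the shuffle product, word level -/
lemma Flin_shtW (u v : List ℕ+) :
    Flin (shtW u v) = sht (FW u) (W v) + sht (W u) (FW v) := by
  induction u, v using shtW.induct with
  | case1 v => simp [shtW_nil_left, Flin_W, FW, sht_one_left]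
  | case2 u h => simp [shtW_nil_right, Flin_W, FW, sht_one_right]
  | case3 k u l v ih1 ih2 =>
      rw [shtW_cons, map_add, Flin_consL, Flin_consL, ih1, ih2]
      simp only [FW_cons, ← consL_W, ← sht_WW, sht_consL, sht_add_left, sht_add_right,
        sht_smul_left, sht_smul_right, consL_add, consL_smul, smul_add]
      try abel

lemma Elin_sht (a b : H1) : Elin (sht a b) = sht (Elin a) b + sht a (Elin b) := by
  induction a using Finsupp.induction_linear with
  | zero => simp
  | add f g hf hg => simp only [sht_add_left, map_add, hf, hg]; abel
  | single u c =>
      induction b using Finsupp.induction_linear with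
      | zero => simp
      | add f g hf hg => simp only [sht_add_right, map_add, hf, hg]; abel
      | single v d =>
          simp only [single_eq_smul_W, sht_smul_left, sht_smul_right, map_smul, sht_WW,
            Elin_W, Elin_shtW, smul_add, smul_comm d c]

lemma Flin_sht (a b : H1) : Flin (sht a b) = sht (Flin a) b + sht a (Flin b) := by
  induction a using Finsupp.induction_linear with
  | zero => simp
  | add f g hf hg => simp only [sht_add_left, map_add, hf, hg]; abel
  | single u c =>
      induction b using Finsupp.induction_linear with
      | zero => simp
      | add f g hf hg => simp only [sht_add_right, map_add, hf, hg]; abel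
      | single v d =>
          simp only [single_eq_smul_W, sht_smul_left, sht_smul_right, map_smul, sht_WW,
            Flin_W, Flin_shtW, smul_add, smul_comm d c]
/-! ### Preservation of yH1 and shtSpan; commutator -/

lemma mem_yH1_of_apply_nil {h : H1} (h0 : h [] = 0) : h ∈ yH1 := (mem_yH1_iff h).mpr h0
lemma apply_nil_of_mem_yH1 {h : H1} (hm : h ∈ yH1) : h [] = 0 := (mem_yH1_iff h).mp hm

lemma HsubM_apply_nil {r n : ℕ} {h : H1} (hr : 1 ≤ r) (hh : h ∈ HsubM r n) : h [] = 0 := by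
  by_contra h0
  have := (hh [] h0).1
  simp at this; omega

lemma lift_yH1 {f : List ℕ+ → H1} (hf : ∀ w, w ≠ [] → (f w) [] = 0) {a : H1}
    (ha : a ∈ yH1) : lift f a ∈ yH1 := by
  refine mem_yH1_of_apply_nil ?_
  rw [lift_apply, Finsupp.sum_apply]
  refine Finset.sum_eq_zero fun w hw => ?_
  have hwne : w ≠ [] := by
    rintro rfl
    exact (Finsupp.mem_support_iff.mp hw) (apply_nil_of_mem_yH1 ha)
  simp [hf w hwne]

lemma Elin_yH1 {a : H1} (ha : a ∈ yH1) : Elin a ∈ yH1 := by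
  refine lift_yH1 (fun w hw => ?_) ha
  match w with
  | k :: ks => exact HsubM_apply_nil (by simp) (sigW1_mem (k :: ks))

lemma Flin_yH1 {a : H1} (ha : a ∈ yH1) : Flin a ∈ yH1 := by
  refine lift_yH1 (fun w hw => ?_) ha
  match w with
  | k :: ks => exact HsubM_apply_nil (by simp) (FW_mem (k :: ks))

lemma sht_mem_shtSpan {a b : H1} (ha : a ∈ yH1) (hb : b ∈ yH1) : sht a b ∈ shtSpan :=
  Submodule.subset_span ⟨a, ha, b, hb, rfl⟩

lemma Elin_shtSpan {h : H1} (hh : h ∈ shtSpan) : Elin h ∈ shtSpan := by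
  induction hh using Submodule.span_induction with
  | mem x hx =>
      obtain ⟨a, ha, b, hb, rfl⟩ := hx
      rw [Elin_sht]
      exact Submodule.add_mem _ (sht_mem_shtSpan (Elin_yH1 ha) hb)
        (sht_mem_shtSpan ha (Elin_yH1 hb))
  | zero => simp
  | add a b _ _ ha hb => rw [map_add]; exact Submodule.add_mem _ ha hb
  | smul c a _ ha => rw [map_smul]; exact Submodule.smul_mem _ _ ha

lemma Flin_shtSpan {h : H1} (hh : h ∈ shtSpan) : Flin h ∈ shtSpan := by
  induction hh using Submodule.span_induction with
  | mem x hx =>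
      obtain ⟨a, ha, b, hb, rfl⟩ := hx
      rw [Flin_sht]
      exact Submodule.add_mem _ (sht_mem_shtSpan (Flin_yH1 ha) hb)
        (sht_mem_shtSpan ha (Flin_yH1 hb))
  | zero => simp
  | add a b _ _ ha hb => rw [map_add]; exact Submodule.add_mem _ ha hb
  | smul c a _ ha => rw [map_smul]; exact Submodule.smul_mem _ _ ha

lemma ppred_add_one {k : ℕ+} (hk : 2 ≤ (k : ℕ)) : ppred k + 1 = k := by
  apply PNat.coe_injective
  rw [PNat.add_coe, ppred_coe hk]
  simp; omega

/-- the sl₂ commutator relation on words -/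
lemma comm_W (w : List ℕ+) :
    Flin (sigW 1 w) - Elin (FW w) = (2 * (wt w : ℚ) - w.length) • W w := by
  induction w with
  | nil => simp [sigW_one_nil, FW]
  | cons k ks ih =>
      have hcast : (((k + 1 : ℕ+) : ℕ) : ℚ) = (k : ℚ) + 1 := by
        rw [PNat.add_coe]; push_cast; ring
      have hFe : ((k : ℚ) - 1) • sigW 1 (ppred k :: ks) =
          ((k : ℚ) - 1) • (((k : ℚ) - 1) • W (k :: ks) + consL (ppred k) (sigW 1 ks)) := by
        rcases eq_or_lt_of_le (PNat.one_le k) with h1 | h2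
        · have : ((k : ℚ) - 1) = 0 := by rw [← h1]; simp
          rw [this, zero_smul, zero_smul]
        · have hk2 : 2 ≤ (k : ℕ) := h2
          rw [sigW_one_cons, ppred_add_one hk2]
          congr 2
          rw [ppred_coe hk2]
          push_cast [Nat.cast_sub (by omega : 1 ≤ (k:ℕ))]
          ring
      have hA : Flin (sigW 1 ks) =
          Elin (FW ks) + (2 * (wt ks : ℚ) - ks.length) • W ks := by
        rw [← ih]; abel
      rw [sigW_one_cons, FW_cons, map_add, map_add, map_smul, map_smul,
        Flin_W, Elin_W, FW_cons, hcast, ppred_succ, Flin_consL, Elin_consL, hFe, hA]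
      simp only [consL_add, consL_smul, consL_W, smul_add, smul_smul]
      have hlen : ((k :: ks).length : ℚ) = (ks.length : ℚ) + 1 := by
        rw [List.length_cons]; push_cast; ring
      have hwt : ((wt (k :: ks) : ℕ) : ℚ) = (k : ℚ) + (wt ks : ℚ) := by
        rw [wt_cons]; push_cast; ring
      rw [hlen, hwt]
      module

/-- commutator on homogeneous elements -/
lemma comm_hom {r n : ℕ} {h : H1} (hh : h ∈ HsubM r n) :
    Flin (Elin h) - Elin (Flin h) = (2 * (n : ℚ) - r) • h := by
  have key : ∀ w : List ℕ+, h w ≠ 0 →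
      Flin (Elin (W w)) - Elin (Flin (W w)) = (2 * (n : ℚ) - r) • W w := by
    intro w hw
    obtain ⟨h1, h2⟩ := hh w hw
    rw [Elin_W, Flin_W, comm_W, h1, h2]
  calc Flin (Elin h) - Elin (Flin h)
      = (Flin ∘ₗ Elin - Elin ∘ₗ Flin) h := by simp
    _ = (Flin ∘ₗ Elin - Elin ∘ₗ Flin) (h.sum fun w c => Finsupp.single w c) := by
        rw [Finsupp.sum_single h]
    _ = h.sum fun w c => (Flin ∘ₗ Elin - Elin ∘ₗ Flin) (Finsupp.single w c) := by
        exact map_finsuppSum _ _ _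
    _ = h.sum fun w c => c • ((2 * (n : ℚ) - r) • W w) := by
        refine Finsupp.sum_congr fun w hw => ?_
        rw [single_eq_smul_W, map_smul]
        congr 1
        have := key w (Finsupp.mem_support_iff.mp hw)
        simpa using this
    _ = (2 * (n : ℚ) - r) • (h.sum fun w c => c • W w) := by
        rw [Finsupp.smul_sum]
        exact Finsupp.sum_congr fun w hw => smul_comm _ _ _
    _ = (2 * (n : ℚ) - r) • h := by
        congr 1
        conv_rhs => rw [← Finsupp.sum_single h]
        exact Finsupp.sum_congr fun w hw => (single_eq_smul_W w _).symm
/-! ### Descent: homogeneous kernel lemma -/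

lemma Flin_mem' {r m : ℕ} {h : H1} (hh : h ∈ HsubM r m) : Flin h ∈ HsubM r (m - 1) := by
  refine lift_mem _ _ _ fun w hw => ?_
  obtain ⟨h1, h2⟩ := hh w hw
  have := FW_mem w
  rwa [h1, h2] at this

lemma iter_mem {r n : ℕ} {u : H1} (hu : u ∈ HsubM r n) :
    ∀ j, Flin^[j] u ∈ HsubM r (n - j) := by
  intro j
  induction j with
  | zero => simpa using hu
  | succ j ih =>
      rw [Function.iterate_succ_apply']
      have := Flin_mem' ih
      have e : n - j - 1 = n - (j + 1) := by omega
      rwa [e] at this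

lemma descent {r n : ℕ} {u : H1} (hu : u ∈ HsubM r n) :
    ∀ k, k + 1 ≤ n →
      (((k : ℚ) + 1) * (2 * (n : ℚ) - r - k)) • (Flin^[k] u) =
        Flin^[k + 1] (Elin u) - Elin (Flin^[k + 1] u) := by
  intro k
  induction k with
  | zero =>
      intro _
      have := comm_hom hu
      simpa using this.symm
  | succ k ih =>
      intro hk
      have hk' : k + 1 ≤ n := by omega
      have ihk := ih hk'
      have hv : Flin^[k + 1] u ∈ HsubM r (n - (k + 1)) := iter_mem hu (k + 1)
      have hcomm := comm_hom hv
      have hcast : ((n - (k + 1) : ℕ) : ℚ) = (n : ℚ) - k - 1 := by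
        rw [Nat.cast_sub hk']; push_cast; ring
      rw [hcast] at hcomm
      -- hcomm : Flin (Elin v) - Elin (Flin v) = (2(n-k-1) - r) • v  with v = Flin^[k+1] u
      have hEv : Elin (Flin^[k + 1] u) =
          Flin^[k + 1] (Elin u) - (((k : ℚ) + 1) * (2 * (n : ℚ) - r - k)) • Flin^[k] u := by
        rw [ihk]; abel
      have hcomm' : Elin (Flin (Flin^[k + 1] u)) =
          Flin (Elin (Flin^[k + 1] u)) - (2 * ((n:ℚ) - k - 1) - r) • Flin^[k + 1] u := by
        rw [← hcomm]; abel
      have e1 : Flin^[k + 1 + 1] (Elin u) = Flin (Flin^[k + 1] (Elin u)) :=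
        Function.iterate_succ_apply' _ _ _
      have e2 : Flin^[k + 1 + 1] u = Flin (Flin^[k + 1] u) :=
        Function.iterate_succ_apply' _ _ _
      have e3 : Flin (Flin^[k] u) = Flin^[k + 1] u :=
        (Function.iterate_succ_apply' _ _ _).symm
      rw [e1, e2, hcomm', hEv, map_sub, map_smul, e3]
      push_cast
      module

lemma main_hom {r n : ℕ} (hr : 1 ≤ r) {u : H1} (hu : u ∈ HsubM r n)
    (hE : Elin u ∈ shtSpan) : u ∈ shtSpan := by
  rcases lt_or_ge n r with hlt | hle
  · rw [HsubM_eq_zero hu hlt]; exact Submodule.zero_mem _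
  · have key : ∀ d, d ≤ n - r + 1 → Flin^[n - r + 1 - d] u ∈ shtSpan := by
      intro d
      induction d with
      | zero =>
          intro _
          have h0 : Flin^[n - r + 1] u ∈ HsubM r (n - (n - r + 1)) := iter_mem hu _
          have he : n - (n - r + 1) = r - 1 := by omega
          rw [he] at h0
          rw [Nat.sub_zero, HsubM_eq_zero h0 (by omega)]
          exact Submodule.zero_mem _
      | succ d ih =>
          intro hd
          have h1 := ih (by omega)
          set j := n - r + 1 - (d + 1) with hj
          have hjj : n - r + 1 - d = j + 1 := by omega
          rw [hjj] at h1
          have hdes := descent hu j (by omega)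
          have hne : ((j : ℚ) + 1) * (2 * (n : ℚ) - r - j) ≠ 0 := by
            have hjn : j ≤ n - r := by omega
            have hj' : (j : ℚ) ≤ (n : ℚ) - r := by
              rw [← Nat.cast_sub hle]; exact_mod_cast hjn
            have hn1 : (1 : ℚ) ≤ (n : ℚ) := by exact_mod_cast hr.trans hle
            have hpos : 0 < 2 * (n : ℚ) - r - j := by linarith
            have hpos1 : 0 < (j : ℚ) + 1 := by positivity
            exact (mul_pos hpos1 hpos).ne'
          have hmem : Flin^[j + 1] (Elin u) - Elin (Flin^[j + 1] u) ∈ shtSpan := by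
            refine Submodule.sub_mem _ ?_ (Elin_shtSpan h1)
            clear hdes
            induction (j + 1) with
            | zero => simpa using hE
            | succ m ihm =>
                rw [Function.iterate_succ_apply']
                exact Flin_shtSpan ihm
          rw [← hdes] at hmem
          have := Submodule.smul_mem shtSpan (((j : ℚ) + 1) * (2 * (n : ℚ) - r - j))⁻¹ hmem
          rwa [inv_smul_smul₀ hne] at this
    have := key (n - r + 1) (le_refl _)
    simpa using this
/-! ### Homogeneous projections -/

noncomputable def proj (r n : ℕ) : H1 →ₗ[ℚ] H1 :=
  lift fun w => if w.length = r ∧ wt w = n then W w else 0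

lemma proj_W (r n : ℕ) (w : List ℕ+) :
    proj r n (W w) = if w.length = r ∧ wt w = n then W w else 0 := lift_W _ _

lemma proj_apply (r n : ℕ) (u : H1) (w : List ℕ+) :
    proj r n u w = if w.length = r ∧ wt w = n then u w else 0 := by
  rw [proj, lift_apply, Finsupp.sum_apply]
  rw [Finsupp.sum]
  by_cases hw : w.length = r ∧ wt w = n
  · simp only [hw, if_true]
    by_cases hmem : w ∈ u.support
    · rw [Finset.sum_eq_single w]
      · simp [hw, W, Finsupp.single_apply]
      · intro v _ hv
        by_cases hc : v.length = r ∧ wt v = n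
        · simp [hc, W, Finsupp.single_apply, hv]
        · simp [hc]
      · intro h; exact absurd hmem h
    · rw [Finsupp.notMem_support_iff.mp hmem]
      refine Finset.sum_eq_zero fun v hv => ?_
      by_cases hc : v.length = r ∧ wt v = n
      · have hvw : v ≠ w := by
          rintro rfl; exact (Finsupp.mem_support_iff.mp hv) (Finsupp.notMem_support_iff.mp hmem)
        simp [hc, W, Finsupp.single_apply, hvw]
      · simp [hc]
  · simp only [hw, if_false]
    refine Finset.sum_eq_zero fun v hv => ?_
    by_cases hc : v.length = r ∧ wt v = n
    · have hvw : v ≠ w := by rintro rfl; exact hw hc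
      simp [hc, W, Finsupp.single_apply, hvw]
    · simp [hc]

lemma proj_mem_HsubM (r n : ℕ) (u : H1) : proj r n u ∈ HsubM r n := by
  intro w hw
  rw [proj_apply] at hw
  by_cases hc : w.length = r ∧ wt w = n
  · exact hc
  · simp [hc] at hw

lemma proj_of_HsubM {r n : ℕ} {u : H1} (hu : u ∈ HsubM r n) : proj r n u = u := by
  ext w
  rw [proj_apply]
  by_cases hc : w.length = r ∧ wt w = n
  · simp [hc]
  · simp only [hc, if_false]
    by_contra h0
    exact hc (hu w fun hz => h0 hz.symm)

lemma proj_of_HsubM_ne {r n r' n' : ℕ} {u : H1} (hu : u ∈ HsubM r' n')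
    (hne : ¬(r' = r ∧ n' = n)) : proj r n u = 0 := by
  ext w
  rw [proj_apply]
  by_cases hc : w.length = r ∧ wt w = n
  · simp only [hc, if_true, Finsupp.coe_zero, Pi.zero_apply]
    by_contra h0
    obtain ⟨h1, h2⟩ := hu w h0
    exact hne ⟨h1.symm.trans hc.1, h2.symm.trans hc.2⟩
  · simp [hc]

lemma proj_decomp (u : H1) :
    u = ∑ p ∈ u.support.image (fun w => (w.length, wt w)), proj p.1 p.2 u := by
  ext w
  rw [Finset.sum_apply']
  by_cases h0 : u w = 0
  · rw [h0]
    refine (Finset.sum_eq_zero fun p _ => ?_).symm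
    rw [proj_apply]
    by_cases hc : w.length = p.1 ∧ wt w = p.2 <;> simp [hc, h0]
  · have hmem : (w.length, wt w) ∈ u.support.image (fun w => (w.length, wt w)) :=
      Finset.mem_image.mpr ⟨w, Finsupp.mem_support_iff.mpr h0, rfl⟩
    rw [Finset.sum_eq_single (w.length, wt w)]
    · rw [proj_apply]; simp
    · intro p _ hp
      rw [proj_apply]
      by_cases hc : w.length = p.1 ∧ wt w = p.2
      · exact absurd (Prod.ext hc.1.symm hc.2.symm) hp
      · simp [hc]
    · intro h; exact absurd hmem h

lemma proj_Elin (r n : ℕ) (u : H1) : proj r (n + 1) (Elin u) = Elin (proj r n u) := by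
  have : proj r (n + 1) ∘ₗ Elin = Elin ∘ₗ proj r n := by
    refine ext_W fun w => ?_
    simp only [LinearMap.comp_apply, Elin_W, proj_W]
    by_cases hc : w.length = r ∧ wt w = n
    · rw [if_pos hc, Elin_W]
      have := sigW1_mem w
      rw [hc.1, hc.2] at this
      exact proj_of_HsubM this
    · rw [if_neg hc, map_zero]
      refine proj_of_HsubM_ne (sigW1_mem w) ?_
      rintro ⟨h1, h2⟩
      exact hc ⟨h1, by omega⟩
  exact DFunLike.congr_fun this u

lemma proj_shtSpan {r n : ℕ} {h : H1} (hh : h ∈ shtSpan) : proj r n h ∈ shtSpan := by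
  have hws : ∀ a ∈ yH1, ∀ b ∈ yH1, sht a b ∈ shtSpan ∧ proj r n (sht a b) ∈ shtSpan := by
    intro a ha
    induction ha using Submodule.span_induction with
    | mem x hx =>
        obtain ⟨k, u, rfl⟩ := hx
        intro b hb
        induction hb using Submodule.span_induction with
        | mem y hy =>
            obtain ⟨l, v, rfl⟩ := hy
            constructor
            · exact sht_mem_shtSpan (Submodule.subset_span ⟨k, u, rfl⟩)
                (Submodule.subset_span ⟨l, v, rfl⟩)
            · rw [sht_WW]
              have hmem := shtW_mem (k :: u) (l :: v)
              by_cases hc : (k :: u).length + (l :: v).length = r ∧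
                  wt (k :: u) + wt (l :: v) = n
              · rw [hc.1, hc.2] at hmem
                rw [proj_of_HsubM hmem, ← sht_WW]
                exact sht_mem_shtSpan (Submodule.subset_span ⟨k, u, rfl⟩)
                  (Submodule.subset_span ⟨l, v, rfl⟩)
              · rw [proj_of_HsubM_ne hmem hc]
                exact Submodule.zero_mem _
        | zero => refine ⟨?_, ?_⟩ <;> simp
        | add y z hy hz ihy ihz =>
            rw [sht_add_right]
            exact ⟨Submodule.add_mem _ ihy.1 ihz.1,
              by rw [map_add]; exact Submodule.add_mem _ ihy.2 ihz.2⟩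
        | smul c y hy ihy =>
            rw [sht_smul_right]
            exact ⟨Submodule.smul_mem _ _ ihy.1,
              by rw [map_smul]; exact Submodule.smul_mem _ _ ihy.2⟩
    | zero =>
        intro b hb
        rw [sht_zero_left]
        exact ⟨Submodule.zero_mem _, by rw [map_zero]; exact Submodule.zero_mem _⟩
    | add y z hy hz ihy ihz =>
        intro b hb
        rw [sht_add_left]
        exact ⟨Submodule.add_mem _ (ihy b hb).1 (ihz b hb).1,
          by rw [map_add]; exact Submodule.add_mem _ (ihy b hb).2 (ihz b hb).2⟩
    | smul c y hy ihy =>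
        intro b hb
        rw [sht_smul_left]
        exact ⟨Submodule.smul_mem _ _ (ihy b hb).1,
          by rw [map_smul]; exact Submodule.smul_mem _ _ (ihy b hb).2⟩
  induction hh using Submodule.span_induction with
  | mem x hx =>
      obtain ⟨a, ha, b, hb, rfl⟩ := hx
      exact (hws a ha b hb).2
  | zero => rw [map_zero]; exact Submodule.zero_mem _
  | add a b _ _ ha hb => rw [map_add]; exact Submodule.add_mem _ ha hb
  | smul c a _ ha => rw [map_smul]; exact Submodule.smul_mem _ _ ha

/-- Main kernel lemma for E: if `u ∈ yH` and `E u ∈ yH ш̃ yH` then `u ∈ yH ш̃ yH`. -/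
lemma main_E {u : H1} (hu : u ∈ yH1) (hE : Elin u ∈ shtSpan) : u ∈ shtSpan := by
  rw [proj_decomp u]
  refine Submodule.sum_mem _ fun p hp => ?_
  rcases Nat.eq_zero_or_pos p.1 with h0 | hpos
  · -- length-0 component vanishes since u [] = 0
    have : proj p.1 p.2 u = 0 := by
      ext w
      rw [proj_apply]
      by_cases hc : w.length = p.1 ∧ wt w = p.2
      · simp only [hc, if_true, Finsupp.coe_zero, Pi.zero_apply]
        have : w = [] := List.length_eq_zero_iff.mp (hc.1.trans h0)
        rw [this]
        exact apply_nil_of_mem_yH1 hu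
      · simp [hc]
    rw [this]; exact Submodule.zero_mem _
  · refine main_hom hpos (proj_mem_HsubM p.1 p.2 u) ?_
    rw [← proj_Elin]
    exact proj_shtSpan hE
/-! ### Antipode identity -/

noncomputable def Sfun (w : List ℕ+) : H1 :=
  ∑ i ∈ Finset.range (w.length + 1),
    ((-1 : ℚ)) ^ (w.length - i) • shtW (w.take i) ((w.drop i).reverse)

@[simp] lemma consL_neg (k : ℕ+) (a : H1) : consL k (-a) = - consL k a := by
  rw [consL_eq, map_neg, consL_eq]

lemma Sfun_single (k : ℕ+) : Sfun [k] = 0 := by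
  rw [Sfun]
  simp [Finset.sum_range_succ, shtW_nil_left, shtW_nil_right]

lemma Sfun_step (k l : ℕ+) (m : List ℕ+)
    (h1 : Sfun (m ++ [l]) = 0) (h2 : Sfun (k :: m) = 0) :
    Sfun (k :: (m ++ [l])) = 0 := by
  set r' := m.length with hr'
  have hlen : (k :: (m ++ [l])).length = r' + 2 := by simp [hr']
  have hlen1 : (m ++ [l]).length = r' + 1 := by simp [hr']
  have hlen2 : (k :: m).length = r' + 1 := by simp [hr']
  -- the two inherited sums
  have hS1 : ∑ j ∈ Finset.range (r' + 1),
      ((-1 : ℚ)) ^ (r' + 1 - j) • shtW ((m ++ [l]).take j) (((m ++ [l]).drop j).reverse)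
      = - W (m ++ [l]) := by
    have h := h1
    rw [Sfun, hlen1, Finset.sum_range_succ] at h
    rw [List.take_of_length_le (by omega), List.drop_of_length_le (by omega)] at h
    simp only [List.reverse_nil, shtW_nil_right, Nat.sub_self, pow_zero, one_smul] at h
    exact eq_neg_of_add_eq_zero_left h
  have hS2 : ∑ j ∈ Finset.range (r' + 1),
      ((-1 : ℚ)) ^ (r' - j) • shtW ((k :: m).take (j + 1)) (((k :: m).drop (j + 1)).reverse)
      = - ((-1 : ℚ)) ^ (r' + 1) • W ((k :: m).reverse) := by
    have h := h2
    rw [Sfun, hlen2, Finset.sum_range_succ'] at h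
    rw [List.take_zero, List.drop_zero, shtW_nil_left, Nat.sub_zero] at h
    have heq : ∀ j ∈ Finset.range (r' + 1),
        ((-1 : ℚ)) ^ (r' + 1 - (j + 1)) • shtW ((k :: m).take (j + 1)) (((k :: m).drop (j + 1)).reverse)
        = ((-1 : ℚ)) ^ (r' - j) • shtW ((k :: m).take (j + 1)) (((k :: m).drop (j + 1)).reverse) := by
      intro j hj
      congr 2
      omega
    rw [Finset.sum_congr rfl heq] at h
    have := eq_neg_of_add_eq_zero_left h
    rw [this, neg_smul]
  -- expand the target
  rw [Sfun, hlen, Finset.sum_range_succ', Finset.sum_range_succ]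
  have hterm : ∀ j ∈ Finset.range (r' + 1),
      ((-1 : ℚ)) ^ (r' + 2 - (j + 1)) • shtW ((k :: (m ++ [l])).take (j + 1))
        (((k :: (m ++ [l])).drop (j + 1)).reverse)
      = ((-1 : ℚ)) ^ (r' + 1 - j) •
          consL k (shtW ((m ++ [l]).take j) (((m ++ [l]).drop j).reverse))
        + (- ((-1 : ℚ)) ^ (r' - j)) •
          consL l (shtW ((k :: m).take (j + 1)) (((k :: m).drop (j + 1)).reverse)) := by
    intro j hj
    have hjr : j ≤ r' := by
      have := Finset.mem_range.mp hj; omega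
    have e1 : (k :: (m ++ [l])).take (j + 1) = k :: (m.take j) := by
      rw [List.take_succ_cons, List.take_append_of_le_length hjr]
    have e2 : (k :: (m ++ [l])).drop (j + 1) = m.drop j ++ [l] := by
      rw [List.drop_succ_cons, List.drop_append_of_le_length hjr]
    have e3 : (m.drop j ++ [l]).reverse = l :: (m.drop j).reverse := by simp
    have e4 : (m ++ [l]).take j = m.take j := List.take_append_of_le_length hjr
    have e5 : ((m ++ [l]).drop j).reverse = l :: (m.drop j).reverse := by
      rw [List.drop_append_of_le_length hjr, e3]
    have e6 : (k :: m).take (j + 1) = k :: m.take j := List.take_succ_cons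
    have e7 : (k :: m).drop (j + 1) = m.drop j := List.drop_succ_cons
    have esgn : r' + 2 - (j + 1) = r' + 1 - j := by omega
    have esgn2 : r' + 1 - j = (r' - j) + 1 := by omega
    rw [e1, e2, e3, e4, e5, e6, e7, esgn, shtW_cons, smul_add]
    congr 1
    rw [esgn2, pow_succ]
    have : ((-1 : ℚ)) ^ (r' - j) * (-1) = - ((-1 : ℚ)) ^ (r' - j) := by ring
    rw [this]
  rw [Finset.sum_congr rfl hterm, Finset.sum_add_distrib]
  -- push consL out of the sums
  have pushk : ∑ j ∈ Finset.range (r' + 1), ((-1 : ℚ)) ^ (r' + 1 - j) •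
      consL k (shtW ((m ++ [l]).take j) (((m ++ [l]).drop j).reverse))
      = consL k (∑ j ∈ Finset.range (r' + 1), ((-1 : ℚ)) ^ (r' + 1 - j) •
          shtW ((m ++ [l]).take j) (((m ++ [l]).drop j).reverse)) := by
    rw [consL_eq, map_sum]
    exact Finset.sum_congr rfl fun j _ => by rw [← consL_eq, consL_smul]
  have inner : ∑ j ∈ Finset.range (r' + 1), ((-1 : ℚ)) ^ (r' - j) •
      consL l (shtW ((k :: m).take (j + 1)) (((k :: m).drop (j + 1)).reverse))
      = consL l (∑ j ∈ Finset.range (r' + 1), ((-1 : ℚ)) ^ (r' - j) •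
          shtW ((k :: m).take (j + 1)) (((k :: m).drop (j + 1)).reverse)) := by
    rw [consL_eq, map_sum]
    exact Finset.sum_congr rfl fun j _ => by rw [← consL_eq, consL_smul]
  have pushl : ∑ j ∈ Finset.range (r' + 1), (- ((-1 : ℚ)) ^ (r' - j)) •
      consL l (shtW ((k :: m).take (j + 1)) (((k :: m).drop (j + 1)).reverse))
      = - consL l (∑ j ∈ Finset.range (r' + 1), ((-1 : ℚ)) ^ (r' - j) •
          shtW ((k :: m).take (j + 1)) (((k :: m).drop (j + 1)).reverse)) := by
    rw [← inner, ← Finset.sum_neg_distrib]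
    exact Finset.sum_congr rfl fun j _ => neg_smul _ _
  rw [pushk, pushl, hS1, hS2]
  -- the two boundary terms
  have eb1 : (k :: (m ++ [l])).take (r' + 1 + 1) = k :: (m ++ [l]) :=
    List.take_of_length_le (by omega)
  have eb2 : (k :: (m ++ [l])).drop (r' + 1 + 1) = [] :=
    List.drop_of_length_le (by omega)
  have eb3 : ((k :: (m ++ [l])).drop 0).reverse = l :: (k :: m).reverse := by simp
  rw [eb1, eb2, eb3, List.take_zero]
  rw [List.reverse_nil, shtW_nil_right, shtW_nil_left]
  have esgn3 : r' + 2 - (r' + 1 + 1) = 0 := by omega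
  have esgn4 : r' + 2 - 0 = (r' + 1) + 1 := by omega
  rw [esgn3, esgn4, pow_zero, one_smul, pow_succ]
  simp only [pow_succ, consL_neg, consL_smul, neg_smul, smul_neg, neg_neg, ← consL_W]
  module

lemma Sfun_eq_zero (w : List ℕ+) (hw : w ≠ []) : Sfun w = 0 := by
  suffices H : ∀ N, ∀ w : List ℕ+, w.length ≤ N → w ≠ [] → Sfun w = 0 by
    exact H w.length w le_rfl hw
  intro N
  induction N with
  | zero =>
      intro w hlen hne
      cases w with
      | nil => exact absurd rfl hne
      | cons k ks => simp at hlen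
  | succ N ihN =>
      intro w hlen hne
      match w with
      | [k] => exact Sfun_single k
      | k :: (a :: w') =>
          obtain ⟨m, l, heq⟩ : ∃ m l, a :: w' = m ++ [l] := by
            rcases List.eq_nil_or_concat (a :: w') with h | ⟨m, l, h⟩
            · simp at h
            · exact ⟨m, l, by rw [h, List.concat_eq_append]⟩
          rw [heq]
          refine Sfun_step k l m ?_ ?_
          · refine ihN (m ++ [l]) ?_ (by simp)
            have : (a :: w').length ≤ N := by
              simp at hlen ⊢; omega
            rwa [heq] at this
          · refine ihN (k :: m) ?_ (by simp)
            have h1 : (a :: w').length = m.length + 1 := by rw [heq]; simp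
            simp at hlen ⊢
            simp at h1
            omega
/-! ### The key word-level identity for ψ̄ and the final theorem -/

lemma W_cons_mem_yH1 (k : ℕ+) (ks : List ℕ+) : W (k :: ks) ∈ yH1 :=
  Submodule.subset_span ⟨k, ks, rfl⟩

lemma psibW_add_sigW (w : List ℕ+) (hw : w ≠ []) : psibW w + sigW 1 w ∈ shtSpan := by
  set r := w.length with hr
  have hsplit : ∑ i ∈ Finset.range r,
      ((-1 : ℚ)) ^ (r - i) • shtW (w.take i) ((w.drop i).reverse) = - W w := by
    have h := Sfun_eq_zero w hw
    rw [Sfun, Finset.sum_range_succ, List.take_length, List.drop_length] at h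
    simp only [List.reverse_nil, shtW_nil_right, Nat.sub_self, pow_zero, one_smul] at h
    exact eq_neg_of_add_eq_zero_left h
  have hterm : ∀ i ∈ Finset.range r,
      ((-1 : ℚ)) ^ (r - i) • sht (W (w.take i)) (sigW 1 ((w.drop i).reverse))
      = ((-1 : ℚ)) ^ (r - i) • Elin (shtW (w.take i) ((w.drop i).reverse))
        - ((-1 : ℚ)) ^ (r - i) • sht (sigW 1 (w.take i)) (W ((w.drop i).reverse)) := by
    intro i _
    have e := Elin_sht (W (w.take i)) (W ((w.drop i).reverse))
    rw [sht_WW, Elin_W, Elin_W] at e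
    rw [← smul_sub]
    congr 1
    rw [e]
    abel
  have hpsib : psibW w = (∑ i ∈ Finset.range r,
        ((-1 : ℚ)) ^ (r - i) • Elin (shtW (w.take i) ((w.drop i).reverse)))
      - ∑ i ∈ Finset.range r,
        ((-1 : ℚ)) ^ (r - i) • sht (sigW 1 (w.take i)) (W ((w.drop i).reverse)) := by
    rw [psibW, ← Finset.sum_sub_distrib]
    exact Finset.sum_congr rfl hterm
  have hEsum : ∑ i ∈ Finset.range r,
      ((-1 : ℚ)) ^ (r - i) • Elin (shtW (w.take i) ((w.drop i).reverse))
      = - sigW 1 w := by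
    have : ∑ i ∈ Finset.range r,
        ((-1 : ℚ)) ^ (r - i) • Elin (shtW (w.take i) ((w.drop i).reverse))
        = Elin (∑ i ∈ Finset.range r,
            ((-1 : ℚ)) ^ (r - i) • shtW (w.take i) ((w.drop i).reverse)) := by
      rw [map_sum]
      exact Finset.sum_congr rfl fun i _ => (map_smul _ _ _).symm
    rw [this, hsplit, map_neg, Elin_W]
  rw [hpsib, hEsum]
  have hfin : - sigW 1 w - (∑ i ∈ Finset.range r,
      ((-1 : ℚ)) ^ (r - i) • sht (sigW 1 (w.take i)) (W ((w.drop i).reverse))) + sigW 1 w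
      = - ∑ i ∈ Finset.range r,
        ((-1 : ℚ)) ^ (r - i) • sht (sigW 1 (w.take i)) (W ((w.drop i).reverse)) := by
    abel
  rw [hfin]
  refine Submodule.neg_mem _ (Submodule.sum_mem _ fun i hi => Submodule.smul_mem _ _ ?_)
  rcases Nat.eq_zero_or_pos i with rfl | hipos
  · rw [List.take_zero, sigW_one_nil, sht_zero_left]
    exact Submodule.zero_mem _
  · have hir : i < r := Finset.mem_range.mp hi
    refine sht_mem_shtSpan ?_ ?_
    · refine HsubM_mem_yH1 (r := (w.take i).length) ?_ (sigW1_mem _)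
      rw [List.length_take]
      omega
    · have hd : (w.drop i).reverse.length = r - i := by
        rw [List.length_reverse, List.length_drop]
      have : (w.drop i).reverse ≠ [] := by
        intro h
        rw [h] at hd
        simp at hd
        omega
      match hh : (w.drop i).reverse with
      | a :: t => exact W_cons_mem_yH1 a t
      | [] => exact absurd hh this

lemma psib_add_Elin_mem {u : H1} (hu : u ∈ yH1) : psib u + Elin u ∈ shtSpan := by
  induction hu using Submodule.span_induction with
  | mem x hx =>
      obtain ⟨k, ks, rfl⟩ := hx
      rw [psib_eq, lift_W, Elin_W]
      exact psibW_add_sigW (k :: ks) (by simp)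
  | zero => rw [psib_eq, map_zero, map_zero, add_zero]; exact Submodule.zero_mem _
  | add a b _ _ ha hb =>
      rw [psib_eq, map_add, map_add, ← psib_eq, ← psib_eq]
      have : psib a + psib b + (Elin a + Elin b)
          = (psib a + Elin a) + (psib b + Elin b) := by abel
      rw [this]
      exact Submodule.add_mem _ ha hb
  | smul c a _ ha =>
      rw [psib_eq, map_smul, map_smul, ← psib_eq, ← smul_add]
      exact Submodule.smul_mem _ _ ha

/-- Lemma 9: `ker ψ̄ ⊆ yH ш̃ yH`. -/
theorem psib_kernel_subset (u : H1) (hu : u ∈ yH1) (h0 : psib u = 0) : u ∈ shtSpan := by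
  have h := psib_add_Elin_mem hu
  rw [h0, zero_add] at h
  exact main_E hu h
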